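/- arXiv:math/0510253 — 2 statements merged into one kernel-verified Lean document; each statement's English description precedes it below -/
import Mathlib

section
/- Let H be a Hopf algebra over k and B ⊆ A a cleft right H-extension with cleaving map j. Then the map A → B, a ↦ Σ a⁰ j̃(a¹) j(1), is a left B-linear retraction of the inclusion B → A; in particular B is a direct summand of A as a left B-module. -/
/-!
Colinearity of `j` says that, in the convolution algebra `Hom(H, A ⊗ H)`, `ρ ∘ j` is the product
of `h ↦ j h ⊗ 1` and `h ↦ 1 ⊗ h`. Since `ρ` is an algebra map, `ρ ∘ j̃` is the convolution inverse
of `ρ ∘ j`, and solving for `h ↦ 1 ⊗ h` gives `∑ (1 ⊗ h₁) ρ(j̃ h₂) = j̃ h ⊗ 1`. Together with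
coassociativity of `ρ` this shows `ρ(∑ a⁰ j̃(a¹)) = ∑ a⁰ j̃(a¹) ⊗ 1`. For `b ∈ B` we have
`ρ(b a) = (b ⊗ 1) ρ(a)`, so `a ↦ ∑ a⁰ j̃(a¹)` is left `B`-linear and sends `b` to `b j̃(1)`;
finally `j̃(1) j(1) = 1` because `Δ 1 = 1 ⊗ 1`.
-/

open TensorProduct

/-- A right `H`-comodule algebra structure on a `k`-algebra `A`: a coassociative counital
coaction `ρ : A → A ⊗ H` which is a morphism of algebras. -/
structure ComodAlg (k H A : Type*) [CommRing k] [Ring H] [Bialgebra k H]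
    [Ring A] [Algebra k A] where
  ρ : A →ₗ[k] A ⊗[k] H
  coassoc : ∀ a : A,
    TensorProduct.assoc k A H H (TensorProduct.map ρ LinearMap.id (ρ a)) =
      TensorProduct.map LinearMap.id Coalgebra.comul (ρ a)
  counit : ∀ a : A,
    TensorProduct.rid k A (TensorProduct.map LinearMap.id Coalgebra.counit (ρ a)) = a
  map_one : ρ 1 = 1
  map_mul : ∀ a b : A, ρ (a * b) = ρ a * ρ b

namespace ComodAlg

variable {k H A : Type*} [CommRing k] [Ring H] [Bialgebra k H] [Ring A] [Algebra k A]

/-- The subalgebra of coinvariants `B = {a : ρ(a) = a ⊗ 1}` of a comodule algebra. -/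
def coinv (c : ComodAlg k H A) : Subalgebra k A where
  carrier := {a : A | c.ρ a = a ⊗ₜ[k] (1 : H)}
  mul_mem' := by
    intro a b ha hb
    simp only [Set.mem_setOf_eq] at *
    rw [c.map_mul, ha, hb, Algebra.TensorProduct.tmul_mul_tmul, mul_one]
  one_mem' := by
    simp only [Set.mem_setOf_eq, c.map_one, Algebra.TensorProduct.one_def]
  add_mem' := by
    intro a b ha hb
    simp only [Set.mem_setOf_eq] at *
    rw [map_add, ha, hb, TensorProduct.add_tmul]
  algebraMap_mem' := by
    intro r
    simp only [Set.mem_setOf_eq, Algebra.algebraMap_eq_smul_one, map_smul, c.map_one,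
      Algebra.TensorProduct.one_def, TensorProduct.smul_tmul']

end ComodAlg

/-- The convolution product on `Hom_k(H, A)`. -/
noncomputable def conv {k H A : Type*} [CommRing k] [AddCommGroup H] [Module k H]
    [Coalgebra k H] [Ring A] [Algebra k A] (f g : H →ₗ[k] A) : H →ₗ[k] A :=
  LinearMap.mul' k A ∘ₗ TensorProduct.map f g ∘ₗ Coalgebra.comul

/-- The unit `η ∘ ε` of the convolution algebra. -/
noncomputable def convOne (k H A : Type*) [CommRing k] [AddCommGroup H] [Module k H]
    [Coalgebra k H] [Ring A] [Algebra k A] : H →ₗ[k] A :=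
  Algebra.linearMap k A ∘ₗ Coalgebra.counit

open WithConv LinearMap Algebra.TensorProduct Coalgebra

local infix:90 " ⊗ₘ " => TensorProduct.map

section Convolution

variable {k H A B : Type*} [CommSemiring k] [AddCommMonoid H] [Module k H] [Coalgebra k H]
  [Semiring A] [Algebra k A] [Semiring B] [Algebra k B]

noncomputable def AlgHom.compConv (ψ : A →ₐ[k] B) :
    WithConv (H →ₗ[k] A) →+* WithConv (H →ₗ[k] B) where
  toFun f := toConv (ψ.toLinearMap ∘ₗ f.ofConv)
  map_one' := by ext; simp
  map_mul' f g := WithConv.ext (algHom_comp_convMul_distrib ψ f g)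
  map_zero' := by ext; simp
  map_add' f g := by ext; simp

end Convolution

section Bialgebra

variable {k H A : Type*} [CommSemiring k] [Semiring H] [Bialgebra k H] [Semiring A] [Algebra k A]

lemma convMul_apply_one (f g : WithConv (H →ₗ[k] A)) : (f * g) 1 = f 1 * g 1 := by
  simp [Bialgebra.comul_one, Algebra.TensorProduct.one_def]

lemma apply_one_mul_apply_one_eq_one {f g : WithConv (H →ₗ[k] A)} (h : f * g = 1) :
    f 1 * g 1 = 1 := by
  rw [← convMul_apply_one, h]
  simp

lemma mul'_comp_map_assoc_symm_lTensor_comul (g : WithConv (H →ₗ[k] A ⊗[k] H)) :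
    mul' k (A ⊗[k] H) ∘ₗ LinearMap.id ⊗ₘ g.ofConv ∘ₗ
        (TensorProduct.assoc k A H H).symm.toLinearMap ∘ₗ lTensor A (comul (R := k)) =
      mul' k (A ⊗[k] H) ∘ₗ
        includeLeft.toLinearMap ⊗ₘ (toConv includeRight.toLinearMap * g).ofConv := by
  refine TensorProduct.ext' fun a h => ?_
  let 𝓡 := ℛ k h
  simp [← 𝓡.eq, tmul_sum, 𝓡.convMul_apply, ← mul_assoc]

end Bialgebra

namespace ComodAlg

variable {k H A : Type*} [CommRing k] [Ring H] [Bialgebra k H] [Ring A] [Algebra k A]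
  {c : ComodAlg k H A} {j jt : H →ₗ[k] A}

variable (c) in
noncomputable def toAlgHom : A →ₐ[k] A ⊗[k] H := AlgHom.ofLinearMap c.ρ c.map_one c.map_mul

variable (c) in
noncomputable def coinvPart (jt : H →ₗ[k] A) : A →ₗ[k] A :=
  mul' k A ∘ₗ LinearMap.id ⊗ₘ jt ∘ₗ c.ρ

section Colinear

variable (hcolin : ∀ h : H, c.ρ (j h) = (j ⊗ₘ LinearMap.id) (comul (R := k) h))
include hcolin

lemma apply_one_mem_coinv : j 1 ∈ c.coinv := by
  change c.ρ (j 1) = j 1 ⊗ₜ 1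
  rw [hcolin, Bialgebra.comul_one, Algebra.TensorProduct.one_def, TensorProduct.map_tmul]
  rfl

lemma toConv_coaction_comp_eq_mul :
    toConv (c.ρ ∘ₗ j) =
      toConv (includeLeft.toLinearMap ∘ₗ j) * toConv includeRight.toLinearMap := by
  have hmap : j ⊗ₘ LinearMap.id =
      mul' k (A ⊗[k] H) ∘ₗ (includeLeft.toLinearMap ∘ₗ j) ⊗ₘ includeRight.toLinearMap := by
    ext x y
    simp
  ext h
  simp [hcolin, hmap]

lemma includeRight_mul_coaction_comp_inv (hj1 : toConv j * toConv jt = 1)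
    (hj2 : toConv jt * toConv j = 1) :
    toConv includeRight.toLinearMap * toConv (c.ρ ∘ₗ jt) =
      toConv (includeLeft.toLinearMap ∘ₗ jt) := by
  set L := (includeLeft : A →ₐ[k] A ⊗[k] H).compConv (H := H)
  set R := toConv (includeRight : H →ₐ[k] A ⊗[k] H).toLinearMap
  have hρ (f : H →ₗ[k] A) : toConv (c.ρ ∘ₗ f) = c.toAlgHom.compConv (toConv f) := rfl
  have hρj : c.toAlgHom.compConv (toConv j) = L (toConv j) * R :=
    toConv_coaction_comp_eq_mul hcolin
  calc R * toConv (c.ρ ∘ₗ jt)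
      = L (toConv jt * toConv j) * R * c.toAlgHom.compConv (toConv jt) := by
        rw [hj2, _root_.map_one, one_mul, hρ]
    _ = L (toConv jt) * c.toAlgHom.compConv (toConv j * toConv jt) := by
        rw [_root_.map_mul, _root_.map_mul, mul_assoc (L _), ← hρj, mul_assoc]
    _ = L (toConv jt) := by rw [hj1, _root_.map_one, mul_one]

end Colinear

section Invariance

variable (hkey : toConv includeRight.toLinearMap * toConv (c.ρ ∘ₗ jt) =
  toConv (includeLeft.toLinearMap ∘ₗ jt))
include hkey

lemma coaction_comp_coinvPart :
    c.ρ ∘ₗ c.coinvPart jt = includeLeft.toLinearMap ∘ₗ c.coinvPart jt := by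
  have hcoassoc : c.ρ ⊗ₘ LinearMap.id ∘ₗ c.ρ =
      (TensorProduct.assoc k A H H).symm.toLinearMap ∘ₗ lTensor A (comul (R := k)) ∘ₗ c.ρ := by
    ext a
    exact (LinearEquiv.eq_symm_apply _).mpr (c.coassoc a)
  have hmul : c.ρ ∘ₗ mul' k A = mul' k (A ⊗[k] H) ∘ₗ c.ρ ⊗ₘ c.ρ := c.toAlgHom.comp_mul'
  have hcomul := mul'_comp_map_assoc_symm_lTensor_comul (toConv (c.ρ ∘ₗ jt))
  rw [hkey] at hcomul
  simp only [← LinearMap.comp_assoc] at hcomul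
  calc c.ρ ∘ₗ c.coinvPart jt
      = mul' k (A ⊗[k] H) ∘ₗ LinearMap.id ⊗ₘ (c.ρ ∘ₗ jt) ∘ₗ c.ρ ⊗ₘ LinearMap.id ∘ₗ c.ρ := by
        simp only [coinvPart, ← LinearMap.comp_assoc, hmul]
        simp only [LinearMap.comp_assoc, ← TensorProduct.map_comp, LinearMap.comp_id,
          LinearMap.id_comp]
    _ = mul' k (A ⊗[k] H) ∘ₗ includeLeft.toLinearMap ⊗ₘ (includeLeft.toLinearMap ∘ₗ jt) ∘ₗ c.ρ := by
        rw [hcoassoc]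
        simp only [← LinearMap.comp_assoc, hcomul]
    _ = includeLeft.toLinearMap ∘ₗ c.coinvPart jt := by
        simp only [coinvPart, ← LinearMap.comp_assoc, AlgHom.comp_mul']
        simp only [LinearMap.comp_assoc, ← TensorProduct.map_comp, LinearMap.comp_id]

lemma coinvPart_mem_coinv (a : A) : c.coinvPart jt a ∈ c.coinv :=
  LinearMap.congr_fun (coaction_comp_coinvPart hkey) a

end Invariance

lemma coinvPart_mul_of_mem_coinv {b : A} (hb : b ∈ c.coinv) (a : A) :
    c.coinvPart jt (b * a) = b * c.coinvPart jt a := by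
  have hmulLeft (y : A ⊗[k] H) : mul' k A ((LinearMap.id ⊗ₘ jt) ((b ⊗ₜ 1) * y)) =
      b * mul' k A ((LinearMap.id ⊗ₘ jt) y) := by
    induction y using TensorProduct.induction_on with
    | zero => simp
    | tmul x h => simp [mul_assoc]
    | add y₁ y₂ h₁ h₂ => simp only [mul_add, map_add, h₁, h₂]
  simp only [coinvPart, LinearMap.comp_apply, c.map_mul, show c.ρ b = b ⊗ₜ 1 from hb, hmulLeft]

lemma coinvPart_of_mem_coinv {b : A} (hb : b ∈ c.coinv) : c.coinvPart jt b = b * jt 1 := by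
  simp [coinvPart, show c.ρ b = b ⊗ₜ 1 from hb]

end ComodAlg

/-- For a cleft extension `B ⊆ A`, the map `a ↦ ∑ a⁰ j̃(a¹) j(1)` is a left `B`-linear
retraction of the inclusion `B → A`; in particular `B` is a direct summand of `A` as a
left `B`-module. -/
theorem cleft_extension_splits
    {k H A : Type*} [CommRing k] [Ring H] [HopfAlgebra k H] [Ring A] [Algebra k A]
    (c : ComodAlg k H A) (j jt : H →ₗ[k] A)
    (hcolin : ∀ h : H, c.ρ (j h) =
      TensorProduct.map j LinearMap.id (Coalgebra.comul (R := k) h))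
    (hj1 : conv j jt = convOne k H A) (hj2 : conv jt j = convOne k H A) :
    -- the map takes values in `B`
    (∀ a : A,
      LinearMap.mul' k A (TensorProduct.map LinearMap.id jt (c.ρ a)) * j 1 ∈ c.coinv) ∧
    -- it restricts to the identity on `B`
    (∀ b ∈ c.coinv,
      LinearMap.mul' k A (TensorProduct.map LinearMap.id jt (c.ρ b)) * j 1 = b) ∧
    -- it is left `B`-linear
    (∀ b ∈ c.coinv, ∀ a : A,
      LinearMap.mul' k A (TensorProduct.map LinearMap.id jt (c.ρ (b * a))) * j 1 =
        b * (LinearMap.mul' k A (TensorProduct.map LinearMap.id jt (c.ρ a)) * j 1)) := by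
  -- `conv` and `convOne` are the product and unit of the convolution ring `WithConv (H →ₗ[k] A)`
  have hinv : toConv j * toConv jt = 1 := congrArg toConv hj1
  have hinv' : toConv jt * toConv j = 1 := congrArg toConv hj2
  have hkey := ComodAlg.includeRight_mul_coaction_comp_inv hcolin hinv hinv'
  refine ⟨fun a => mul_mem (ComodAlg.coinvPart_mem_coinv hkey a)
      (ComodAlg.apply_one_mem_coinv hcolin), fun b hb => ?_, fun b hb a => ?_⟩
  · change c.coinvPart jt b * j 1 = b
    rw [ComodAlg.coinvPart_of_mem_coinv hb, mul_assoc, apply_one_mul_apply_one_eq_one hinv',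
      mul_one]
  · change c.coinvPart jt (b * a) * j 1 = b * (c.coinvPart jt a * j 1)
    rw [ComodAlg.coinvPart_mul_of_mem_coinv hb, mul_assoc]
end

section
/- Let H be a Hopf algebra over k and B ⊆ A a cleft right H-extension with cleaving map j. A map j' : H → A is a cleaving map for B ⊆ A if and only if there exists a convolution invertible map χ : H → B such that j'(h) = Σ χ(h₁) j(h₂) for all h ∈ H. -/
open TensorProduct

section ConvLemmas

set_option linter.unusedSectionVars false

variable {k H C D : Type*} [CommRing k] [AddCommGroup H] [Module k H] [Coalgebra k H]
  [Ring C] [Algebra k C] [Ring D] [Algebra k D]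

private lemma mul_threefold :
    LinearMap.mul' k C ∘ₗ (LinearMap.mul' k C).rTensor C =
      LinearMap.mul' k C ∘ₗ (LinearMap.mul' k C).lTensor C ∘ₗ
        (TensorProduct.assoc k C C C).toLinearMap := by
  apply TensorProduct.ext_threefold
  intro a b c
  simp [mul_assoc]

private lemma assoc_natural (f g e : H →ₗ[k] C) :
    TensorProduct.map f (TensorProduct.map g e) ∘ₗ (TensorProduct.assoc k H H H).toLinearMap =
      (TensorProduct.assoc k C C C).toLinearMap ∘ₗ TensorProduct.map (TensorProduct.map f g) e := by
  apply TensorProduct.ext_threefold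
  intro a b c
  simp

lemma conv_assoc (f g e : H →ₗ[k] C) : conv (conv f g) e = conv f (conv g e) := by
  have lhs : conv (conv f g) e =
      LinearMap.mul' k C ∘ₗ (LinearMap.mul' k C).rTensor C ∘ₗ
        TensorProduct.map (TensorProduct.map f g) e ∘ₗ
        (Coalgebra.comul (R := k) (A := H)).rTensor H ∘ₗ Coalgebra.comul := by
    unfold conv
    have h1 : TensorProduct.map
        (LinearMap.mul' k C ∘ₗ TensorProduct.map f g ∘ₗ Coalgebra.comul) e =
        TensorProduct.map (LinearMap.mul' k C) LinearMap.id ∘ₗ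
          TensorProduct.map (TensorProduct.map f g ∘ₗ Coalgebra.comul) e := by
      rw [← TensorProduct.map_comp, LinearMap.id_comp]
    have h2 : TensorProduct.map (TensorProduct.map f g ∘ₗ (Coalgebra.comul (R := k))) e =
        TensorProduct.map (TensorProduct.map f g) e ∘ₗ
          TensorProduct.map (Coalgebra.comul (R := k)) LinearMap.id := by
      rw [← TensorProduct.map_comp, LinearMap.comp_id]
    rw [h1, h2]
    rfl
  have rhs : conv f (conv g e) =
      LinearMap.mul' k C ∘ₗ (LinearMap.mul' k C).lTensor C ∘ₗ
        TensorProduct.map f (TensorProduct.map g e) ∘ₗ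
        (Coalgebra.comul (R := k) (A := H)).lTensor H ∘ₗ Coalgebra.comul := by
    unfold conv
    have h1 : TensorProduct.map f
        (LinearMap.mul' k C ∘ₗ TensorProduct.map g e ∘ₗ Coalgebra.comul) =
        TensorProduct.map LinearMap.id (LinearMap.mul' k C) ∘ₗ
          TensorProduct.map f (TensorProduct.map g e ∘ₗ Coalgebra.comul) := by
      rw [← TensorProduct.map_comp, LinearMap.id_comp]
    have h2 : TensorProduct.map f (TensorProduct.map g e ∘ₗ (Coalgebra.comul (R := k))) =
        TensorProduct.map f (TensorProduct.map g e) ∘ₗ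
          TensorProduct.map LinearMap.id (Coalgebra.comul (R := k)) := by
      rw [← TensorProduct.map_comp, LinearMap.comp_id]
    rw [h1, h2]
    rfl
  have mul3 : (LinearMap.mul' k C ∘ₗ (LinearMap.mul' k C).lTensor C) ∘ₗ
      (TensorProduct.assoc k C C C).toLinearMap =
      LinearMap.mul' k C ∘ₗ (LinearMap.mul' k C).rTensor C := by
    rw [LinearMap.comp_assoc, ← mul_threefold]
  rw [lhs, rhs, ← Coalgebra.coassoc]
  simp only [← LinearMap.comp_assoc]
  rw [LinearMap.comp_assoc _ (TensorProduct.map f (TensorProduct.map g e)), assoc_natural]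
  simp only [← LinearMap.comp_assoc]
  rw [mul3]

lemma conv_one (f : H →ₗ[k] C) : conv f (convOne k H C) = f := by
  have key : TensorProduct.map f ((Algebra.linearMap k C) ∘ₗ (Coalgebra.counit (R := k))) =
      TensorProduct.map f (Algebra.linearMap k C) ∘ₗ
        (Coalgebra.counit (R := k) (A := H)).lTensor H := by
    rw [LinearMap.lTensor, ← TensorProduct.map_comp, LinearMap.comp_id]
  ext h
  simp only [conv, convOne, LinearMap.comp_apply, key]
  rw [Coalgebra.lTensor_counit_comul]
  simp

lemma one_conv (f : H →ₗ[k] C) : conv (convOne k H C) f = f := by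
  have key : TensorProduct.map ((Algebra.linearMap k C) ∘ₗ (Coalgebra.counit (R := k))) f =
      TensorProduct.map (Algebra.linearMap k C) f ∘ₗ
        (Coalgebra.counit (R := k) (A := H)).rTensor H := by
    rw [LinearMap.rTensor, ← TensorProduct.map_comp, LinearMap.comp_id]
  ext h
  simp only [conv, convOne, LinearMap.comp_apply, key]
  rw [Coalgebra.rTensor_counit_comul]
  simp [Algebra.algebraMap_eq_smul_one]

lemma comp_conv (φ : C →ₗ[k] D) (hone : φ 1 = 1)
    (hmul : ∀ a b : C, φ (a * b) = φ a * φ b) (f g : H →ₗ[k] C) :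
    φ ∘ₗ conv f g = conv (φ ∘ₗ f) (φ ∘ₗ g) := by
  have hm : φ ∘ₗ LinearMap.mul' k C = LinearMap.mul' k D ∘ₗ TensorProduct.map φ φ := by
    apply TensorProduct.ext'
    intro a b
    simp [hmul]
  unfold conv
  simp only [← LinearMap.comp_assoc]
  rw [hm]
  simp only [LinearMap.comp_assoc]
  rw [← LinearMap.comp_assoc _ (TensorProduct.map f g), ← TensorProduct.map_comp]

lemma comp_convOne (φ : C →ₗ[k] D) (hone : φ 1 = 1) :
    φ ∘ₗ convOne k H C = convOne k H D := by
  ext h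
  simp [convOne, Algebra.algebraMap_eq_smul_one, hone]

lemma conv_inv_unique {f g e : H →ₗ[k] C} (hfg : conv f g = convOne k H C)
    (hef : conv e f = convOne k H C) : g = e := by
  have := conv_assoc e f g
  rw [hef, hfg, one_conv, conv_one] at this
  exact this

end ConvLemmas

section Antipode

variable {k H : Type*} [CommRing k] [Ring H] [HopfAlgebra k H]

lemma conv_antipode_id :
    conv (HopfAlgebra.antipode (R := k) (A := H)) LinearMap.id = convOne k H H := by
  unfold conv convOne
  rw [← HopfAlgebra.mul_antipode_rTensor_comul]
  rfl

lemma conv_id_antipode :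
    conv LinearMap.id (HopfAlgebra.antipode (R := k) (A := H)) = convOne k H H := by
  unfold conv convOne
  rw [← HopfAlgebra.mul_antipode_lTensor_comul]
  rfl

end Antipode

section Main
set_option linter.unusedSectionVars false
variable {k H A : Type*} [CommRing k] [Ring H] [HopfAlgebra k H] [Ring A] [Algebra k A]

private noncomputable def ιA : A →ₗ[k] A ⊗[k] H :=
  (Algebra.TensorProduct.includeLeft : A →ₐ[k] A ⊗[k] H).toLinearMap

private noncomputable def ιH : H →ₗ[k] A ⊗[k] H :=
  (Algebra.TensorProduct.includeRight : H →ₐ[k] A ⊗[k] H).toLinearMap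

@[simp] private lemma ιA_apply (a : A) : (ιA : A →ₗ[k] A ⊗[k] H) a = a ⊗ₜ[k] 1 := rfl

@[simp] private lemma ιH_apply (h : H) : (ιH : H →ₗ[k] A ⊗[k] H) h = 1 ⊗ₜ[k] h := rfl

private lemma ιA_one : (ιA : A →ₗ[k] A ⊗[k] H) 1 = 1 := by
  rw [ιA_apply, Algebra.TensorProduct.one_def]

private lemma ιH_one : (ιH : H →ₗ[k] A ⊗[k] H) 1 = 1 := by
  rw [ιH_apply, Algebra.TensorProduct.one_def]

private lemma ιA_mul (a b : A) : (ιA : A →ₗ[k] A ⊗[k] H) (a * b) = ιA a * ιA b := by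
  simp [Algebra.TensorProduct.tmul_mul_tmul]

private lemma ιH_mul (a b : H) : (ιH : H →ₗ[k] A ⊗[k] H) (a * b) = ιH a * ιH b := by
  simp [Algebra.TensorProduct.tmul_mul_tmul]

private lemma ιA_conv (f g : H →ₗ[k] A) :
    conv ((ιA : A →ₗ[k] A ⊗[k] H) ∘ₗ f) (ιA ∘ₗ g) = ιA ∘ₗ conv f g := by
  rw [comp_conv (k:=k) (H:=H) (C:=A) (D:=A ⊗[k] H) ιA ιA_one ιA_mul]

private lemma ιH_conv (f g : H →ₗ[k] H) :
    conv ((ιH : H →ₗ[k] A ⊗[k] H) ∘ₗ f) (ιH ∘ₗ g) = ιH ∘ₗ conv f g := by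
  rw [comp_conv (k:=k) (H:=H) (C:=H) (D:=A ⊗[k] H) ιH ιH_one ιH_mul]

private lemma ιA_convOne :
    (ιA : A →ₗ[k] A ⊗[k] H) ∘ₗ convOne k H A = convOne k H (A ⊗[k] H) :=
  comp_convOne (k:=k) (H:=H) (C:=A) (D:=A ⊗[k] H) ιA ιA_one

private lemma ιH_convOne :
    (ιH : H →ₗ[k] A ⊗[k] H) ∘ₗ convOne k H H = convOne k H (A ⊗[k] H) :=
  comp_convOne (k:=k) (H:=H) (C:=H) (D:=A ⊗[k] H) ιH ιH_one

private lemma conv_ιH_antipode_ιH :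
    conv ((ιH : H →ₗ[k] A ⊗[k] H) ∘ₗ HopfAlgebra.antipode (R := k)) ιH =
      convOne k H (A ⊗[k] H) := by
  have h0 : conv ((ιH : H →ₗ[k] A ⊗[k] H) ∘ₗ HopfAlgebra.antipode (R := k))
      (ιH ∘ₗ LinearMap.id) = convOne k H (A ⊗[k] H) := by
    rw [ιH_conv, conv_antipode_id, ιH_convOne]
  rwa [LinearMap.comp_id] at h0

private lemma conv_ιH_id_antipode :
    conv (ιH : H →ₗ[k] A ⊗[k] H) (ιH ∘ₗ HopfAlgebra.antipode (R := k)) =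
      convOne k H (A ⊗[k] H) := by
  have h0 : conv ((ιH : H →ₗ[k] A ⊗[k] H) ∘ₗ LinearMap.id)
      (ιH ∘ₗ HopfAlgebra.antipode (R := k)) = convOne k H (A ⊗[k] H) := by
    rw [ιH_conv, conv_id_antipode, ιH_convOne]
  rwa [LinearMap.comp_id] at h0

private lemma mul_incl :
    LinearMap.mul' k (A ⊗[k] H) ∘ₗ
      TensorProduct.map (ιA : A →ₗ[k] A ⊗[k] H) (ιH : H →ₗ[k] A ⊗[k] H) = LinearMap.id := by
  apply TensorProduct.ext'
  intro a h
  simp [Algebra.TensorProduct.tmul_mul_tmul]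

private lemma conv_incl (f : H →ₗ[k] A) :
    conv ((ιA : A →ₗ[k] A ⊗[k] H) ∘ₗ f) ιH =
      TensorProduct.map f LinearMap.id ∘ₗ Coalgebra.comul := by
  have h1 : TensorProduct.map ((ιA : A →ₗ[k] A ⊗[k] H) ∘ₗ f) (ιH : H →ₗ[k] A ⊗[k] H) =
      TensorProduct.map ιA ιH ∘ₗ TensorProduct.map f LinearMap.id := by
    rw [← TensorProduct.map_comp, LinearMap.comp_id]
  unfold conv
  rw [h1]
  simp only [← LinearMap.comp_assoc]
  rw [mul_incl]
  simp only [LinearMap.comp_assoc, LinearMap.id_comp]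

private lemma rho_conv (c : ComodAlg k H A) (f g : H →ₗ[k] A) :
    c.ρ ∘ₗ conv f g = conv (c.ρ ∘ₗ f) (c.ρ ∘ₗ g) :=
  comp_conv (k:=k) (H:=H) (C:=A) (D:=A ⊗[k] H) c.ρ c.map_one c.map_mul f g

private lemma rho_convOne (c : ComodAlg k H A) :
    c.ρ ∘ₗ convOne k H A = convOne k H (A ⊗[k] H) :=
  comp_convOne (k:=k) (H:=H) (C:=A) (D:=A ⊗[k] H) c.ρ c.map_one

private lemma rho_inv (c : ComodAlg k H A) (f g : H →ₗ[k] A)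
    (hf : c.ρ ∘ₗ f = conv (ιA ∘ₗ f) ιH)
    (hfg : conv f g = convOne k H A) (hgf : conv g f = convOne k H A) :
    c.ρ ∘ₗ g = conv ((ιH : H →ₗ[k] A ⊗[k] H) ∘ₗ HopfAlgebra.antipode (R := k)) (ιA ∘ₗ g) := by
  have h1 : conv (c.ρ ∘ₗ f) (c.ρ ∘ₗ g) = convOne k H (A ⊗[k] H) := by
    rw [← rho_conv, hfg, rho_convOne]
  have h2 : conv (conv ((ιH : H →ₗ[k] A ⊗[k] H) ∘ₗ HopfAlgebra.antipode (R := k)) (ιA ∘ₗ g))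
      (c.ρ ∘ₗ f) = convOne k H (A ⊗[k] H) := by
    rw [hf, conv_assoc, ← conv_assoc (ιA ∘ₗ g) (ιA ∘ₗ f) ιH, ιA_conv, hgf, ιA_convOne,
      one_conv, conv_ιH_antipode_ιH]
  calc c.ρ ∘ₗ g
      = conv (convOne k H (A ⊗[k] H)) (c.ρ ∘ₗ g) := (one_conv _).symm
    _ = conv (conv (conv ((ιH : H →ₗ[k] A ⊗[k] H) ∘ₗ HopfAlgebra.antipode (R := k)) (ιA ∘ₗ g))
          (c.ρ ∘ₗ f)) (c.ρ ∘ₗ g) := by rw [h2]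
    _ = conv (conv ((ιH : H →ₗ[k] A ⊗[k] H) ∘ₗ HopfAlgebra.antipode (R := k)) (ιA ∘ₗ g))
          (conv (c.ρ ∘ₗ f) (c.ρ ∘ₗ g)) := conv_assoc _ _ _
    _ = _ := by rw [h1, conv_one]

lemma mem_coinv_iff (c : ComodAlg k H A) (x : A) :
    x ∈ c.coinv ↔ c.ρ x = x ⊗ₜ[k] (1 : H) := Iff.rfl

/-- colinearity pointwise iff map-level. -/
private lemma colin_iff (c : ComodAlg k H A) (f : H →ₗ[k] A) :
    (∀ h : H, c.ρ (f h) = TensorProduct.map f LinearMap.id (Coalgebra.comul (R := k) h)) ↔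
      c.ρ ∘ₗ f = conv ((ιA : A →ₗ[k] A ⊗[k] H) ∘ₗ f) ιH := by
  rw [conv_incl]
  constructor
  · intro hp
    ext h
    exact hp h
  · intro hp h
    exact LinearMap.congr_fun hp h

end Main

section MainProof

variable {k H A : Type*} [CommRing k] [Ring H] [HopfAlgebra k H] [Ring A] [Algebra k A]

/-- Corestriction of a linear map to the coinvariants. -/
private noncomputable def toCoinv (c : ComodAlg k H A) (f : H →ₗ[k] A)
    (hf : ∀ h, f h ∈ c.coinv) : H →ₗ[k] ↥c.coinv where
  toFun h := ⟨f h, hf h⟩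
  map_add' x y := Subtype.ext (by simp)
  map_smul' r x := Subtype.ext (by simp)

private lemma val_toCoinv (c : ComodAlg k H A) (f : H →ₗ[k] A) (hf : ∀ h, f h ∈ c.coinv) :
    (Subalgebra.val c.coinv).toLinearMap ∘ₗ toCoinv c f hf = f := rfl

private lemma val_comp_inj (c : ComodAlg k H A) {F G : H →ₗ[k] ↥c.coinv}
    (h : (Subalgebra.val c.coinv).toLinearMap ∘ₗ F = (Subalgebra.val c.coinv).toLinearMap ∘ₗ G) :
    F = G :=
  LinearMap.ext fun x => Subtype.ext (LinearMap.congr_fun h x)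

private lemma val_conv (c : ComodAlg k H A) (F G : H →ₗ[k] ↥c.coinv) :
    (Subalgebra.val c.coinv).toLinearMap ∘ₗ conv F G =
      conv ((Subalgebra.val c.coinv).toLinearMap ∘ₗ F)
        ((Subalgebra.val c.coinv).toLinearMap ∘ₗ G) :=
  comp_conv (k:=k) (H:=H) (C:=↥c.coinv) (D:=A) (Subalgebra.val c.coinv).toLinearMap
    (map_one (Subalgebra.val c.coinv)) (fun a b => map_mul (Subalgebra.val c.coinv) a b) F G

private lemma val_convOne (c : ComodAlg k H A) :
    (Subalgebra.val c.coinv).toLinearMap ∘ₗ convOne k H ↥c.coinv = convOne k H A :=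
  comp_convOne (k:=k) (H:=H) (C:=↥c.coinv) (D:=A) (Subalgebra.val c.coinv).toLinearMap
    (map_one (Subalgebra.val c.coinv))

end MainProof

/-- For a cleft extension `B ⊆ A` with cleaving map `j`, a map `j' : H → A` is a
cleaving map if and only if `j'(h) = ∑ χ(h₁) j(h₂)` for some convolution invertible
`χ : H → B`. -/
theorem cleaving_maps_related_by_gauge
    {k H A : Type*} [CommRing k] [Ring H] [HopfAlgebra k H] [Ring A] [Algebra k A]
    (c : ComodAlg k H A) (j jt : H →ₗ[k] A)
    -- `j` is a cleaving map with convolution inverse `jt`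
    (hcolin : ∀ h : H, c.ρ (j h) =
      TensorProduct.map j LinearMap.id (Coalgebra.comul (R := k) h))
    (hj1 : conv j jt = convOne k H A) (hj2 : conv jt j = convOne k H A)
    (j' : H →ₗ[k] A) :
    -- `j'` is a cleaving map
    ((∀ h : H, c.ρ (j' h) =
        TensorProduct.map j' LinearMap.id (Coalgebra.comul (R := k) h)) ∧
      (∃ jt' : H →ₗ[k] A, conv j' jt' = convOne k H A ∧ conv jt' j' = convOne k H A)) ↔
    -- iff it is obtained from `j` by a convolution invertible `χ : H → B`
    (∃ χ : H →ₗ[k] ↥c.coinv,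
      (∃ χinv : H →ₗ[k] ↥c.coinv,
        conv χ χinv = convOne k H ↥c.coinv ∧ conv χinv χ = convOne k H ↥c.coinv) ∧
      j' = LinearMap.mul' k A ∘ₗ
        TensorProduct.map ((Subalgebra.val c.coinv).toLinearMap ∘ₗ χ) j ∘ₗ
          Coalgebra.comul) := by
  have hρj : c.ρ ∘ₗ j = conv ((ιA : A →ₗ[k] A ⊗[k] H) ∘ₗ j) ιH := (colin_iff c j).mp hcolin
  constructor
  · rintro ⟨hcol', jt', hj'1, hj'2⟩
    have hρj' : c.ρ ∘ₗ j' = conv ((ιA : A →ₗ[k] A ⊗[k] H) ∘ₗ j') ιH := (colin_iff c j').mp hcol'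
    have hρjt := rho_inv c j jt hρj hj1 hj2
    have hρjt' := rho_inv c j' jt' hρj' hj'1 hj'2
    have key : ∀ p q : H →ₗ[k] A, c.ρ ∘ₗ p = conv ((ιA : A →ₗ[k] A ⊗[k] H) ∘ₗ p) ιH →
        c.ρ ∘ₗ q = conv ((ιH : H →ₗ[k] A ⊗[k] H) ∘ₗ HopfAlgebra.antipode (R := k)) (ιA ∘ₗ q) →
        c.ρ ∘ₗ conv p q = ιA ∘ₗ conv p q := by
      intro p q hp hq
      rw [rho_conv, hp, hq, conv_assoc,
        ← conv_assoc (ιH) ((ιH : H →ₗ[k] A ⊗[k] H) ∘ₗ HopfAlgebra.antipode (R := k)) (ιA ∘ₗ q),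
        conv_ιH_id_antipode, one_conv, ιA_conv]
    have hχA := key j' jt hρj' hρjt
    have hχinvA := key j jt' hρj hρjt'
    have memχ : ∀ h : H, conv j' jt h ∈ c.coinv := fun h => by
      rw [mem_coinv_iff]
      simpa using LinearMap.congr_fun hχA h
    have memχinv : ∀ h : H, conv j jt' h ∈ c.coinv := fun h => by
      rw [mem_coinv_iff]
      simpa using LinearMap.congr_fun hχinvA h
    have e1 : conv (conv j' jt) (conv j jt') = convOne k H A := by
      rw [conv_assoc, ← conv_assoc jt j jt', hj2, one_conv, hj'1]
    have e2 : conv (conv j jt') (conv j' jt) = convOne k H A := by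
      rw [conv_assoc, ← conv_assoc jt' j' jt, hj'2, one_conv, hj1]
    refine ⟨toCoinv c _ memχ, ⟨toCoinv c _ memχinv, ?_, ?_⟩, ?_⟩
    · apply val_comp_inj c
      rw [val_conv, val_toCoinv, val_toCoinv, val_convOne, e1]
    · apply val_comp_inj c
      rw [val_conv, val_toCoinv, val_toCoinv, val_convOne, e2]
    · show j' = conv ((Subalgebra.val c.coinv).toLinearMap ∘ₗ toCoinv c _ memχ) j
      rw [val_toCoinv, conv_assoc, hj2, conv_one]
  · rintro ⟨χ, ⟨χinv, hI1, hI2⟩, hdef⟩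
    have hj'c : j' = conv ((Subalgebra.val c.coinv).toLinearMap ∘ₗ χ) j := hdef
    set χA := (Subalgebra.val c.coinv).toLinearMap ∘ₗ χ with hχAdef
    set χinvA := (Subalgebra.val c.coinv).toLinearMap ∘ₗ χinv with hχinvAdef
    have E1 : conv χA χinvA = convOne k H A := by
      rw [hχAdef, hχinvAdef, ← val_conv, hI1, val_convOne]
    have E2 : conv χinvA χA = convOne k H A := by
      rw [hχAdef, hχinvAdef, ← val_conv, hI2, val_convOne]
    have hχA : c.ρ ∘ₗ χA = (ιA : A →ₗ[k] A ⊗[k] H) ∘ₗ χA := by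
      ext h
      have hm := (χ h).2
      rw [mem_coinv_iff] at hm
      simpa [hχAdef] using hm
    constructor
    · apply (colin_iff c j').mpr
      rw [hj'c, rho_conv, hχA, hρj, ← conv_assoc, ιA_conv]
    · refine ⟨conv jt χinvA, ?_, ?_⟩
      · rw [hj'c, conv_assoc, ← conv_assoc j jt χinvA, hj1, one_conv, E1]
      · rw [hj'c, conv_assoc, ← conv_assoc χinvA χA j, E2, one_conv, hj2]
end
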